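/- In the Euclidean plane, a point can serve as the nearest neighbor of at most 6 other points when all pairwise distances are distinct; i.e., the in-degree of every vertex of the nearest-neighbor digraph is at most 6 (so Q_l = 0 for l > 6). -/

import Mathlib

/-!
Two points `x ≠ y` that both have `v` as nearest neighbour satisfy
`max (dist x v) (dist y v) < dist x y`, since the distances are distinct. By the law of cosines
this forces `∠ x v y > π / 3`. But cutting the plane around `v` into six sectors of opening
`π / 3`, any two of more than six points lie in a common sector, and so subtend an angle less
than `π / 3` at `v`.
-/

open InnerProductGeometry Module Real
open scoped EuclideanGeometry EuclideanSpace

namespace Complex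

/-- The index `k` of the sector `((k - 1) π / 3, k π / 3]` containing `arg z`. -/
noncomputable def argSextant (z : ℂ) : ℤ := ⌈z.arg * 3 / π⌉

theorem argSextant_mem_Icc (z : ℂ) : argSextant z ∈ Finset.Icc (-2 : ℤ) 3 := by
  have hlow : -3 < z.arg * 3 / π := by
    rw [lt_div_iff₀ pi_pos]; linarith [neg_pi_lt_arg z]
  have hup : z.arg * 3 / π ≤ 3 := by
    rw [div_le_iff₀ pi_pos]; linarith [arg_le_pi z]
  rw [Finset.mem_Icc, argSextant]
  exact ⟨Int.le_ceil_iff.2 (by push_cast; linarith), Int.ceil_le.2 (by exact_mod_cast hup)⟩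

theorem abs_arg_sub_arg_lt_of_argSextant_eq {z w : ℂ} (h : argSextant z = argSextant w) :
    |z.arg - w.arg| < π / 3 := by
  have hz := Int.le_ceil (z.arg * 3 / π)
  have hz' := Int.ceil_lt_add_one (z.arg * 3 / π)
  have hw := Int.le_ceil (w.arg * 3 / π)
  have hw' := Int.ceil_lt_add_one (w.arg * 3 / π)
  rw [argSextant, argSextant] at h
  rw [h] at hz hz'
  have hlt : |z.arg * 3 / π - w.arg * 3 / π| < 1 :=
    abs_sub_lt_iff.2 ⟨by linarith, by linarith⟩
  rwa [← sub_div, ← sub_mul, abs_div, abs_mul, abs_of_pos pi_pos,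
    abs_of_pos (three_pos (α := ℝ)), div_lt_one pi_pos, ← lt_div_iff₀ three_pos] at hlt

theorem angle_lt_pi_div_three_of_argSextant_eq {z w : ℂ} (hz : z ≠ 0) (hw : w ≠ 0)
    (h : argSextant z = argSextant w) : angle z w < π / 3 := by
  have hlt := abs_arg_sub_arg_lt_of_argSextant_eq h
  have harg : (z / w).arg = z.arg - w.arg := by
    rw [← arg_coe_angle_toReal_eq_arg, arg_div_coe_angle hz hw, ← Real.Angle.coe_sub,
      Real.Angle.toReal_coe_eq_self_iff]
    constructor <;> linarith [abs_lt.1 hlt, pi_pos]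
  rwa [angle_eq_abs_arg hz hw, harg]

theorem card_le_six_of_pairwise_pi_div_three_lt_angle {S : Finset ℂ} (h0 : 0 ∉ S)
    (hS : (S : Set ℂ).Pairwise fun z w => π / 3 < angle z w) : S.card ≤ 6 := by
  refine (Finset.card_le_card_of_injOn argSextant (fun z _ => argSextant_mem_Icc z)
    fun z hz w hw hzw => ?_).trans (by simp)
  by_contra hne
  exact (angle_lt_pi_div_three_of_argSextant_eq (ne_of_mem_of_not_mem hz h0)
    (ne_of_mem_of_not_mem hw h0) hzw).not_gt (hS hz hw hne)

end Complex

section EuclideanAffineSpace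

variable {V P : Type*} [NormedAddCommGroup V] [InnerProductSpace ℝ V] [MetricSpace P]
  [NormedAddTorsor V P]

theorem dist_le_max_of_angle_le_pi_div_three {x v y : P} (h : ∠ x v y ≤ π / 3) :
    dist x y ≤ max (dist x v) (dist y v) := by
  have hcos : 1 / 2 ≤ cos (∠ x v y) := by
    rw [← cos_pi_div_three]
    exact cos_le_cos_of_nonneg_of_le_pi (EuclideanGeometry.angle_nonneg x v y)
      (by linarith [pi_pos]) h
  have ha := dist_nonneg (x := x) (y := v)
  have hb := dist_nonneg (x := y) (y := v)
  have hsq : dist x y ^ 2 ≤ max (dist x v) (dist y v) ^ 2 :=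
    calc dist x y ^ 2
        = dist x v ^ 2 + dist y v ^ 2 - 2 * dist x v * dist y v * cos (∠ x v y) := by
          rw [sq, EuclideanGeometry.law_cos x v y]; ring
      _ ≤ dist x v ^ 2 + dist y v ^ 2 - dist x v * dist y v := by
          nlinarith [mul_nonneg ha hb]
      _ ≤ max (dist x v) (dist y v) ^ 2 := by
          rcases le_total (dist x v) (dist y v) with hab | hab
          · rw [max_eq_right hab]; nlinarith
          · rw [max_eq_left hab]; nlinarith
  exact (pow_le_pow_iff_left₀ dist_nonneg (ha.trans (le_max_left _ _)) two_ne_zero).1 hsq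

theorem card_le_six_of_pairwise_pi_div_three_lt_angle [Fact (finrank ℝ V = 2)] (v : P)
    {S : Finset P} (hv : v ∉ S)
    (hS : (S : Set P).Pairwise fun x y => π / 3 < ∠ x v y) : S.card ≤ 6 := by
  have := FiniteDimensional.of_fact_finrank_eq_two (K := ℝ) (V := V)
  let e : V ≃ₗᵢ[ℝ] ℂ := (Complex.isometryOfOrthonormal
    ((stdOrthonormalBasis ℝ V).reindex (finCongr Fact.out))).symm
  let f : P → ℂ := fun x => e (x -ᵥ v)
  have hf : Function.Injective f := e.injective.comp (vsub_left_injective v)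
  rw [← Finset.card_image_of_injective S hf]
  refine Complex.card_le_six_of_pairwise_pi_div_three_lt_angle ?_ ?_
  · simp only [Finset.mem_image, f, map_eq_zero_iff _ e.injective, vsub_eq_zero_iff_eq]
    rintro ⟨x, hx, rfl⟩
    exact hv hx
  · rw [Finset.coe_image]
    refine Set.Pairwise.image (hS.imp fun x y hxy => ?_)
    show π / 3 < angle (e.toLinearIsometry (x -ᵥ v)) (e.toLinearIsometry (y -ᵥ v))
    rwa [LinearIsometry.angle_map]

end EuclideanAffineSpace

/-- In the Euclidean plane with distinct pairwise distances, a point `v` can serve as the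
nearest neighbor of at most 6 other points: the in-degree of every vertex of the
nearest-neighbor digraph is at most 6. -/
theorem nn_indegree_le_six
    (s : Finset (EuclideanSpace ℝ (Fin 2)))
    (hdist : ∀ x ∈ s, ∀ y ∈ s, ∀ x' ∈ s, ∀ y' ∈ s,
      x ≠ y → x' ≠ y' → dist x y = dist x' y' →
        ({x, y} : Set (EuclideanSpace ℝ (Fin 2))) = {x', y'})
    (v : EuclideanSpace ℝ (Fin 2)) (hv : v ∈ s) :
    (s.filter fun x => x ≠ v ∧ ∀ z ∈ s, z ≠ x → dist x v ≤ dist x z).card ≤ 6 := by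
  set T := s.filter fun x => x ≠ v ∧ ∀ z ∈ s, z ≠ x → dist x v ≤ dist x z
  have hnear : ∀ x ∈ T, ∀ y ∈ T, x ≠ y → dist x v < dist x y := by
    intro x hx y hy hxy
    simp only [T, Finset.mem_filter] at hx hy
    refine (hx.2.2 y hy.1 (Ne.symm hxy)).lt_of_ne fun h => ?_
    rcases Set.pair_eq_pair_iff.1 (hdist x hx.1 v hv x hx.1 y hy.1 hx.2.1 hxy h) with
      ⟨-, rfl⟩ | ⟨rfl, -⟩
    exacts [hy.2.1 rfl, hxy rfl]
  have hvT : v ∉ T := fun hvT => (Finset.mem_filter.1 hvT).2.1 rfl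
  refine card_le_six_of_pairwise_pi_div_three_lt_angle v hvT
    fun x hx y hy hxy => lt_of_not_ge fun hangle => ?_
  have hyx := hnear y hy x hx (Ne.symm hxy)
  rw [dist_comm y x] at hyx
  exact (dist_le_max_of_angle_le_pi_div_three hangle).not_gt (max_lt (hnear x hx y hy hxy) hyx)
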